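/- arXiv:math/0312281 — 4 statements merged into one kernel-verified Lean document; each statement's English description precedes it below -/
import Mathlib

section
/- For every (x_o,ξ_{o3}) ∈ closure(ω_o) × (2ℤ+1), every (P,Q) ∈ ℕ², every h ∈ (0,h_o], every λ ≥ 1, every s ≥ 0, every f with φf integrable, and every (x₁,x₂,t): A_{s,P,Q}(x_o,ξ_{o3})f(x₁,x₂, sgn(ξ_{o3})ρ, t) = 0, and A_{s,P,Q}(x_o,ξ_{o3})f(x₁,x₂, −sgn(ξ_{o3})ρ, t) = A_s^{−2Q}(x_o,ξ_{o3})f(x₁,x₂, −sgn(ξ_{o3})ρ, t) + A_s^{2P+1}(x_o,ξ_{o3})f(x₁,x₂, −sgn(ξ_{o3})ρ, t). -/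
open MeasureTheory Set

noncomputable section

local notation "R3" => EuclideanSpace ℝ (Fin 3)

/-- point of `ℝ³` with given coordinates -/
def pt (a b c : ℝ) : R3 := WithLp.toLp 2 ![a, b, c]

def sdir (i : Fin 3) : R3 := EuclideanSpace.single i 1

/-- Laplacian of a real-valued function on `ℝ³`. -/
def lapR (f : R3 → ℝ) (x : R3) : ℝ :=
  ∑ i : Fin 3, lineDeriv ℝ (fun y => lineDeriv ℝ f y (sdir i)) x (sdir i)

/-- Laplacian of a complex-valued function on `ℝ³`. -/
def lapC (f : R3 → ℂ) (x : R3) : ℂ :=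
  ∑ i : Fin 3, lineDeriv ℝ (fun y => lineDeriv ℝ f y (sdir i)) x (sdir i)

/-- The weight function `a`, in coordinates:
`a(x,t,s) = (is+1)^{-3/2} e^{-|x|²/(4h(is+1))} (−ihs+1)^{-1/2} e^{-t²/(4(−ihs+1))}`. -/
def aC (h x₁ x₂ x₃ t s : ℝ) : ℂ :=
  (Complex.I * (s:ℂ) + 1) ^ (-(3/2) : ℂ) *
    Complex.exp (-((x₁^2 + x₂^2 + x₃^2 : ℝ) : ℂ) / (4 * (h:ℂ) * (Complex.I * (s:ℂ) + 1))) *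
  ((-Complex.I * (h:ℂ) * (s:ℂ) + 1) ^ (-(1/2) : ℂ) *
    Complex.exp (-((t^2 : ℝ) : ℂ) / (4 * (-Complex.I * (h:ℂ) * (s:ℂ) + 1))))

/-- `a_o(x,t) = a(x−x_o,t,0) = e^{-|x-x_o|²/(4h)} e^{-t²/4}`. -/
def aO (h : ℝ) (x_o x : R3) (t : ℝ) : ℝ :=
  Real.exp (-‖x - x_o‖^2 / (4*h)) * Real.exp (-t^2 / 4)

/-- The Fourier transform `ĝ(ξ,τ) = ∫_{Ω×ℝ} e^{−i(x·ξ+tτ)} g(x,t) dx dt`. -/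
def fhat (Ω : Set R3) (g : R3 → ℝ → ℝ) (ξ₁ ξ₂ ξ₃ τ : ℝ) : ℂ :=
  ∫ x in Ω, ∫ t : ℝ,
    Complex.exp (-Complex.I * ((x 0 * ξ₁ + x 1 * ξ₂ + x 2 * ξ₃ + t*τ : ℝ) : ℂ)) * (g x t : ℂ)

/-- The Fourier integral operator `A_s^n(x_o,ξ_{o3}) f (x,t)`; here `k = ξ_{o3}` is an odd
integer, `φ(x,t) = χ(x) a_o(x,t)` appears via `(φf)^`. -/
def Aop (Ω : Set R3) (χ : R3 → ℝ) (ρ h lam : ℝ) (x_o : R3) (k : ℤ) (f : R3 → ℝ → ℝ)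
    (n : ℤ) (s : ℝ) (x : R3) (t : ℝ) : ℂ :=
  ((-1 : ℂ)^n / (((2*Real.pi)^4 : ℝ) : ℂ)) *
  ∫ ξ₁ : ℝ, ∫ ξ₂ : ℝ, ∫ ξ₃ in Icc ((k:ℝ)-1) ((k:ℝ)+1), ∫ τ in Ioo (-lam) lam,
    Complex.exp (Complex.I * ((x 0 * ξ₁ + x 1 * ξ₂ + t*τ : ℝ) : ℂ)) *
    Complex.exp (Complex.I * ((((-1:ℝ)^n * x 2 + 2*(n:ℝ)*(Int.sign k : ℝ)*ρ) * ξ₃ : ℝ) : ℂ)) *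
    Complex.exp (-Complex.I * (((ξ₁^2+ξ₂^2+ξ₃^2 - τ^2)*h*s : ℝ) : ℂ)) *
    fhat Ω (fun y r => χ y * aO h x_o y r * f y r) ξ₁ ξ₂ ξ₃ τ *
    aC h (x 0 - x_o 0 - 2*ξ₁*h*s) (x 1 - x_o 1 - 2*ξ₂*h*s)
      (x 2 - (-1:ℝ)^n * (-(2*(n:ℝ)*(Int.sign k : ℝ)*ρ) + x_o 2 + 2*ξ₃*h*s))
      (t + 2*τ*h*s) s

/-- `A_{s,P,Q}(x_o,ξ_{o3}) f = Σ_{n=−2Q}^{2P+1} A_s^n(x_o,ξ_{o3}) f`. -/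
def AopSum (Ω : Set R3) (χ : R3 → ℝ) (ρ h lam : ℝ) (x_o : R3) (k : ℤ) (f : R3 → ℝ → ℝ)
    (P Q : ℕ) (s : ℝ) (x : R3) (t : ℝ) : ℂ :=
  ∑ n ∈ Finset.Icc (-(2*(Q:ℤ))) (2*(P:ℤ)+1), Aop Ω χ ρ h lam x_o k f n s x t

lemma aC_neg (h a b c t s : ℝ) : aC h a b (-c) t s = aC h a b c t s := by
  simp [aC]

lemma pt_two (a b c : ℝ) : (pt a b c) 2 = c := by simp [pt]

lemma neg_one_zpow_sq (n : ℤ) : ((-1:ℝ)^n) * ((-1:ℝ)^n) = 1 := by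
  rw [← zpow_add₀ (by norm_num : (-1:ℝ) ≠ 0), show n + n = 2 * n by ring, zpow_mul]
  norm_num

lemma Aop_pair (Ω : Set R3) (χ : R3 → ℝ) (ρ h lam : ℝ) (x_o : R3) (k : ℤ) (f : R3 → ℝ → ℝ)
    (s : ℝ) (x : R3) (t : ℝ) (n : ℤ)
    (hp : (-1:ℝ)^n * x 2 = (Int.sign k : ℝ) * ρ) :
    Aop Ω χ ρ h lam x_o k f n s x t + Aop Ω χ ρ h lam x_o k f (n+1) s x t = 0 := by
  have hne : (-1:ℝ) ≠ 0 := by norm_num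
  have hneC : (-1:ℂ) ≠ 0 := by norm_num
  have he : ((-1:ℝ)^n) * ((-1:ℝ)^n) = 1 := neg_one_zpow_sq n
  have hm : ((-1:ℝ))^(n+1) = -((-1:ℝ)^n) := by rw [zpow_add_one₀ hne]; ring
  have hmC : ((-1:ℂ))^(n+1) = -((-1:ℂ)^n) := by rw [zpow_add_one₀ hneC]; ring
  unfold Aop
  rw [hmC]
  set e : ℝ := (-1:ℝ)^n with hedef
  have hI : (∫ ξ₁ : ℝ, ∫ ξ₂ : ℝ, ∫ ξ₃ in Icc ((k:ℝ)-1) ((k:ℝ)+1), ∫ τ in Ioo (-lam) lam,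
      Complex.exp (Complex.I * ((x 0 * ξ₁ + x 1 * ξ₂ + t*τ : ℝ) : ℂ)) *
      Complex.exp (Complex.I * ((((-1:ℝ)^(n+1) * x 2 + 2*((n+1:ℤ):ℝ)*(Int.sign k : ℝ)*ρ) * ξ₃ : ℝ) : ℂ)) *
      Complex.exp (-Complex.I * (((ξ₁^2+ξ₂^2+ξ₃^2 - τ^2)*h*s : ℝ) : ℂ)) *
      fhat Ω (fun y r => χ y * aO h x_o y r * f y r) ξ₁ ξ₂ ξ₃ τ *
      aC h (x 0 - x_o 0 - 2*ξ₁*h*s) (x 1 - x_o 1 - 2*ξ₂*h*s)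
        (x 2 - (-1:ℝ)^(n+1) * (-(2*((n+1:ℤ):ℝ)*(Int.sign k : ℝ)*ρ) + x_o 2 + 2*ξ₃*h*s))
        (t + 2*τ*h*s) s) =
      (∫ ξ₁ : ℝ, ∫ ξ₂ : ℝ, ∫ ξ₃ in Icc ((k:ℝ)-1) ((k:ℝ)+1), ∫ τ in Ioo (-lam) lam,
      Complex.exp (Complex.I * ((x 0 * ξ₁ + x 1 * ξ₂ + t*τ : ℝ) : ℂ)) *
      Complex.exp (Complex.I * ((((-1:ℝ)^n * x 2 + 2*((n:ℤ):ℝ)*(Int.sign k : ℝ)*ρ) * ξ₃ : ℝ) : ℂ)) *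
      Complex.exp (-Complex.I * (((ξ₁^2+ξ₂^2+ξ₃^2 - τ^2)*h*s : ℝ) : ℂ)) *
      fhat Ω (fun y r => χ y * aO h x_o y r * f y r) ξ₁ ξ₂ ξ₃ τ *
      aC h (x 0 - x_o 0 - 2*ξ₁*h*s) (x 1 - x_o 1 - 2*ξ₂*h*s)
        (x 2 - (-1:ℝ)^n * (-(2*((n:ℤ):ℝ)*(Int.sign k : ℝ)*ρ) + x_o 2 + 2*ξ₃*h*s))
        (t + 2*τ*h*s) s) := by
    congr 1; funext ξ₁; congr 1; funext ξ₂; congr 1; funext ξ₃; congr 1; funext τ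
    have h2 : (((-1:ℝ)^(n+1) * x 2 + 2*((n+1:ℤ):ℝ)*(Int.sign k : ℝ)*ρ) * ξ₃ : ℝ) =
        (((-1:ℝ)^n * x 2 + 2*((n:ℤ):ℝ)*(Int.sign k : ℝ)*ρ) * ξ₃ : ℝ) := by
      rw [hm]; push_cast; linear_combination (-2*ξ₃) * hp
    have h5 : (x 2 - (-1:ℝ)^(n+1) * (-(2*((n+1:ℤ):ℝ)*(Int.sign k : ℝ)*ρ) + x_o 2 + 2*ξ₃*h*s)) =
        -(x 2 - (-1:ℝ)^n * (-(2*((n:ℤ):ℝ)*(Int.sign k : ℝ)*ρ) + x_o 2 + 2*ξ₃*h*s)) := by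
      rw [hm]; push_cast; linear_combination 2*e*hp - 2*(x 2)*he
    rw [h2, h5, aC_neg]
  rw [hI]
  ring

lemma pt_pair_sum_zero (Ω : Set R3) (χ : R3 → ℝ) (ρ h lam : ℝ) (x_o : R3) (k : ℤ)
    (f : R3 → ℝ → ℝ) (s t : ℝ) (x : R3) (a b : ℤ) (ha : Even a) (hb : Odd b)
    (hpx : ∀ n : ℤ, Even n → (-1:ℝ)^n * x 2 = (Int.sign k : ℝ) * ρ) :
    ∑ n ∈ Finset.Icc a b, Aop Ω χ ρ h lam x_o k f n s x t = 0 := by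
  classical
  refine Finset.sum_involution
    (fun m _ => if Even m then m + 1 else m - 1) ?_ ?_ ?_ ?_
  · intro m hm
    by_cases hev : Even m
    · simp only [if_pos hev]
      exact Aop_pair Ω χ ρ h lam x_o k f s x t m (hpx m hev)
    · simp only [if_neg hev]
      have hev' : Even (m - 1) := by
        obtain ⟨c, hc⟩ := (Int.even_or_odd m).resolve_left hev
        exact ⟨c, by omega⟩
      have := Aop_pair Ω χ ρ h lam x_o k f s x t (m-1) (hpx (m-1) hev')
      rw [show m - 1 + 1 = m by omega] at this
      linear_combination this
  · intro m hm _
    by_cases hev : Even m <;> simp [hev] <;> omega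
  · intro m hm
    rw [Finset.mem_Icc] at hm ⊢
    obtain ⟨a', ha'⟩ := ha
    obtain ⟨b', hb'⟩ := hb
    by_cases hev : Even m
    · simp only [if_pos hev]
      obtain ⟨c, hc⟩ := hev
      omega
    · obtain ⟨c, hc⟩ := (Int.even_or_odd m).resolve_left hev
      simp only [if_neg hev]
      omega
  · intro m hm
    by_cases hev : Even m
    · have h1 : ¬ Even (m + 1) := by simp [Int.even_add_one, hev]
      simp [hev, h1]
    · have h1 : Even (m - 1) := by
        obtain ⟨c, hc⟩ := (Int.even_or_odd m).resolve_left hev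
        exact ⟨c, by omega⟩
      simp [hev, h1]

lemma pt_pair_sum_zero' (Ω : Set R3) (χ : R3 → ℝ) (ρ h lam : ℝ) (x_o : R3) (k : ℤ)
    (f : R3 → ℝ → ℝ) (s t : ℝ) (x : R3) (a b : ℤ) (ha : Odd a) (hb : Even b)
    (hpx : ∀ n : ℤ, Odd n → (-1:ℝ)^n * x 2 = (Int.sign k : ℝ) * ρ) :
    ∑ n ∈ Finset.Icc a b, Aop Ω χ ρ h lam x_o k f n s x t = 0 := by
  classical
  refine Finset.sum_involution
    (fun m _ => if Even m then m - 1 else m + 1) ?_ ?_ ?_ ?_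
  · intro m hm
    by_cases hev : Even m
    · simp only [if_pos hev]
      have hod : Odd (m - 1) := by
        obtain ⟨c, hc⟩ := hev; exact ⟨c - 1, by omega⟩
      have := Aop_pair Ω χ ρ h lam x_o k f s x t (m-1) (hpx (m-1) hod)
      rw [show m - 1 + 1 = m by omega] at this
      linear_combination this
    · simp only [if_neg hev]
      exact Aop_pair Ω χ ρ h lam x_o k f s x t m
        (hpx m ((Int.even_or_odd m).resolve_left hev))
  · intro m hm _
    by_cases hev : Even m <;> simp [hev] <;> omega
  · intro m hm
    rw [Finset.mem_Icc] at hm ⊢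
    obtain ⟨a', ha'⟩ := ha
    obtain ⟨b', hb'⟩ := hb
    by_cases hev : Even m
    · simp only [if_pos hev]
      obtain ⟨c, hc⟩ := hev
      omega
    · obtain ⟨c, hc⟩ := (Int.even_or_odd m).resolve_left hev
      simp only [if_neg hev]
      omega
  · intro m hm
    by_cases hev : Even m
    · have h1 : ¬ Even (m - 1) := by
        obtain ⟨c, hc⟩ := hev
        rw [Int.even_iff] at *
        omega
      simp [hev, h1]
    · have h1 : Even (m + 1) := by
        obtain ⟨c, hc⟩ := (Int.even_or_odd m).resolve_left hev
        exact ⟨c + 1, by omega⟩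
      simp [hev, h1]

/-- **Boundary values of `A_{s,P,Q}` on the planes `x₃ = ±sgn(ξ_{o3})ρ`.**
`A_{s,P,Q}f` vanishes on `x₃ = sgn(ξ_{o3})ρ`, and on `x₃ = −sgn(ξ_{o3})ρ` it reduces to
`A_s^{−2Q}f + A_s^{2P+1}f`. -/
theorem fio_boundary_values
    (m₁ m₂ ρ : ℝ) (hm₁ : 0 < m₁) (hm₂ : 0 < m₂) (hρ : 0 < ρ)
    (Ω : Set R3) (hΩopen : IsOpen Ω) (hΩconn : IsConnected Ω)
    (hΩbdd : Bornology.IsBounded Ω)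
    (Υ : Set R3)
    (hΥ : Υ ⊆ {x : R3 | ¬ (x 0 ∈ Ioo (-m₁) m₁ ∧ x 1 ∈ Ioo (-m₂) m₂)})
    (hbd : frontier Ω =
      {x : R3 | x 0 ∈ Icc (-m₁) m₁ ∧ x 1 ∈ Icc (-m₂) m₂ ∧ x 2 = ρ} ∪
      {x : R3 | x 0 ∈ Icc (-m₁) m₁ ∧ x 1 ∈ Icc (-m₂) m₂ ∧ x 2 = -ρ} ∪ Υ)
    (r_o : ℝ) (hr₁ : 0 < r_o) (hr₂ : r_o < min (min m₁ m₂) ρ / 2)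
    (x_o : R3)
    (hx_o : x_o ∈ closure {x : R3 | x 0 ∈ Ioo (-m₁+r_o) (m₁-r_o) ∧
      x 1 ∈ Ioo (-m₂+r_o) (m₂-r_o) ∧ x 2 ∈ Ioo (-(ρ/4)) (ρ/4)})
    (k : ℤ) (hk : Odd k) (P Q : ℕ)
    (h : ℝ) (hh : h ∈ Ioc (0:ℝ) (min 1 ((r_o/8)^2)))
    (lam : ℝ) (hlam : 1 ≤ lam)
    (χ : R3 → ℝ) (hχsm : ContDiff ℝ (⊤ : ℕ∞) χ)
    (hχsupp : tsupport χ ⊆ Metric.ball x_o (r_o/2))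
    (hχ01 : ∀ x, 0 ≤ χ x ∧ χ x ≤ 1)
    (hχ1 : ∀ x ∈ Metric.ball x_o (r_o/4), χ x = 1)
    (f : R3 → ℝ → ℝ)
    (hfint : Integrable (fun p : R3 × ℝ => χ p.1 * aO h x_o p.1 p.2 * f p.1 p.2)
      ((volume.restrict Ω).prod volume)) :
    ∀ (s : ℝ), 0 ≤ s → ∀ (x₁ x₂ t : ℝ),
      AopSum Ω χ ρ h lam x_o k f P Q s (pt x₁ x₂ ((Int.sign k : ℝ) * ρ)) t = 0 ∧
      AopSum Ω χ ρ h lam x_o k f P Q s (pt x₁ x₂ (-((Int.sign k : ℝ) * ρ))) t =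
        Aop Ω χ ρ h lam x_o k f (-(2*(Q:ℤ))) s
          (pt x₁ x₂ (-((Int.sign k : ℝ) * ρ))) t +
        Aop Ω χ ρ h lam x_o k f (2*(P:ℤ)+1) s
          (pt x₁ x₂ (-((Int.sign k : ℝ) * ρ))) t := by
  intro s hs x₁ x₂ t
  constructor
  · unfold AopSum
    refine pt_pair_sum_zero Ω χ ρ h lam x_o k f s t _ _ _ ⟨-(Q:ℤ), by ring⟩ ⟨(P:ℤ), by ring⟩ ?_
    intro n hn
    rw [hn.neg_one_zpow, pt_two, one_mul]
  · unfold AopSum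
    have h1 : (2*(P:ℤ)+1) ∉ Finset.Icc (-(2*(Q:ℤ))+1) (2*(P:ℤ)) := by
      simp [Finset.mem_Icc]
    have h2 : (-(2*(Q:ℤ))) ∉ insert (2*(P:ℤ)+1) (Finset.Icc (-(2*(Q:ℤ))+1) (2*(P:ℤ))) := by
      simp [Finset.mem_Icc]
      omega
    have hdecomp : Finset.Icc (-(2*(Q:ℤ))) (2*(P:ℤ)+1) =
        insert (-(2*(Q:ℤ))) (insert (2*(P:ℤ)+1) (Finset.Icc (-(2*(Q:ℤ))+1) (2*(P:ℤ)))) := by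
      ext m
      simp only [Finset.mem_Icc, Finset.mem_insert]
      omega
    rw [hdecomp, Finset.sum_insert h2, Finset.sum_insert h1]
    have hmid : ∑ n ∈ Finset.Icc (-(2*(Q:ℤ))+1) (2*(P:ℤ)),
        Aop Ω χ ρ h lam x_o k f n s (pt x₁ x₂ (-((Int.sign k : ℝ) * ρ))) t = 0 := by
      refine pt_pair_sum_zero' Ω χ ρ h lam x_o k f s t _ _ _ ⟨-(Q:ℤ), by ring⟩
        ⟨(P:ℤ), by ring⟩ ?_
      intro n hn
      rw [hn.neg_one_zpow, pt_two]
      ring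
    rw [hmid, add_zero]
end
end

section
/- Let ρ > 0. There exists a constant c > 0, depending only on ρ, such that for every h ∈ (0,1], every L ≥ 0, and all real numbers y and b, Σ_{n∈ℤ} exp( −((−1)^n y + 2nρ − b)² / (4h(L²+1)) ) ≤ 4 + c √(h(L²+1)). -/
open Set

open MeasureTheory Real in
lemma sum_exp_succ_sq_le (c : ℝ) (hc : 0 < c) (n : ℕ) :
    ∑ j ∈ Finset.range n, Real.exp (-c * ((j:ℝ)+1)^2) ≤ Real.sqrt (π / c) / 2 := by
  have hint : Integrable (fun x : ℝ => Real.exp (-c * x^2)) := integrable_exp_neg_mul_sq hc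
  have hii : ∀ a b : ℝ, IntervalIntegrable (fun x => Real.exp (-c * x^2)) volume a b :=
    fun a b => hint.intervalIntegrable
  have step : ∀ j : ℕ, Real.exp (-c * ((j:ℝ)+1)^2)
      ≤ ∫ x in (j:ℝ)..((j:ℝ)+1), Real.exp (-c * x^2) := by
    intro j
    have h1 : Real.exp (-c * ((j:ℝ)+1)^2)
        = ∫ _x in (j:ℝ)..((j:ℝ)+1), Real.exp (-c * ((j:ℝ)+1)^2) := by
      rw [intervalIntegral.integral_const]; simp
    rw [h1]
    apply intervalIntegral.integral_mono_on (by linarith) (intervalIntegrable_const) (hii _ _)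
    intro x hx
    apply Real.exp_le_exp.2
    have hx0 : 0 ≤ x := le_trans (Nat.cast_nonneg j) hx.1
    have h2 : x^2 ≤ ((j:ℝ)+1)^2 := pow_le_pow_left₀ hx0 hx.2 2
    nlinarith
  calc ∑ j ∈ Finset.range n, Real.exp (-c * ((j:ℝ)+1)^2)
      ≤ ∑ j ∈ Finset.range n, ∫ x in (j:ℝ)..((j:ℝ)+1), Real.exp (-c * x^2) :=
        Finset.sum_le_sum fun j _ => step j
    _ = ∫ x in (0:ℝ)..(n:ℝ), Real.exp (-c * x^2) := by
        have := intervalIntegral.sum_integral_adjacent_intervals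
          (a := fun k : ℕ => (k:ℝ)) (n := n)
          (f := fun x => Real.exp (-c*x^2)) (μ := volume) (fun k _ => hii _ _)
        push_cast at this ⊢
        convert this using 2
    _ ≤ ∫ x in Set.Ioi (0:ℝ), Real.exp (-c * x^2) := by
        rw [intervalIntegral.integral_of_le (Nat.cast_nonneg n)]
        apply MeasureTheory.setIntegral_mono_set hint.integrableOn
        · filter_upwards with x using Real.exp_nonneg _
        · exact (Set.Ioc_subset_Ioi_self).eventuallyLE
    _ = Real.sqrt (π / c) / 2 := integral_gaussian_Ioi c

open Real in
lemma sum_exp_sq_le (c : ℝ) (hc : 0 < c) (T : Finset ℕ) :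
    ∑ j ∈ T, Real.exp (-c * (j:ℝ)^2) ≤ 1 + Real.sqrt (π / c) / 2 := by
  obtain ⟨n, hn⟩ := T.exists_nat_subset_range
  have h1 : ∑ j ∈ T, Real.exp (-c * (j:ℝ)^2)
      ≤ ∑ j ∈ Finset.range n, Real.exp (-c * (j:ℝ)^2) :=
    Finset.sum_le_sum_of_subset_of_nonneg hn (fun _ _ _ => (Real.exp_nonneg _))
  refine h1.trans ?_
  cases n with
  | zero => simp; positivity
  | succ m =>
    rw [Finset.sum_range_succ']
    have h2 := sum_exp_succ_sq_le c hc m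
    have h3 : ∑ j ∈ Finset.range m, Real.exp (-c * ((j+1:ℕ):ℝ)^2)
        = ∑ j ∈ Finset.range m, Real.exp (-c * ((j:ℝ)+1)^2) := by
      apply Finset.sum_congr rfl; intro j _; push_cast; ring_nf
    rw [h3]
    have h4 : Real.exp (-c * ((0:ℕ):ℝ)^2) = 1 := by norm_num
    rw [h4]
    linarith

open Real in
lemma key_sum (d t a : ℝ) (hd : 0 < d) (ht : 0 < t) (s : Finset ℤ) :
    ∑ n ∈ s, Real.exp (-(a + (n:ℝ)*d)^2/(4*t)) ≤ 2 + Real.sqrt (π / (d^2/(4*t))) := by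
  classical
  set c : ℝ := d^2/(4*t) with hcdef
  have hc : 0 < c := by positivity
  set M : ℤ := ⌈(-a)/d⌉ with hMdef
  have hM1 : 0 ≤ a + (M:ℝ)*d := by
    have h := Int.le_ceil ((-a)/d)
    rw [← hMdef] at h
    have := (div_le_iff₀ hd).mp h
    linarith
  have hM2 : a + ((M:ℝ)-1)*d < 0 := by
    have h := Int.ceil_lt_add_one ((-a)/d)
    rw [← hMdef] at h
    have h' : (M:ℝ) - 1 < (-a)/d := by linarith
    have := (lt_div_iff₀ hd).mp h'
    linarith
  have h4t : (0:ℝ) < 4*t := by positivity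
  -- pointwise bound
  have key : ∀ n : ℤ, Real.exp (-(a + (n:ℝ)*d)^2/(4*t)) ≤
      Real.exp (-c * (((if M ≤ n then n - M else M - 1 - n).toNat : ℕ) : ℝ)^2) := by
    intro n
    apply Real.exp_le_exp.2
    split_ifs with hn
    · have hK : (((n - M).toNat : ℕ) : ℝ) = (n:ℝ) - (M:ℝ) := by
        rw [show (((n - M).toNat : ℕ):ℝ) = ((((n - M).toNat : ℕ):ℤ):ℝ) by push_cast; ring,
          Int.toNat_of_nonneg (show (0:ℤ) ≤ n - M by omega)]
        push_cast; ring
      rw [hK]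
      have hnM : (M:ℝ) ≤ (n:ℝ) := by exact_mod_cast hn
      have h2 : 0 ≤ ((n:ℝ)-(M:ℝ))*d := mul_nonneg (by linarith) hd.le
      have h1 : ((n:ℝ)-(M:ℝ))*d ≤ a + (n:ℝ)*d := by nlinarith
      have h3 : (((n:ℝ)-(M:ℝ))*d)^2 ≤ (a + (n:ℝ)*d)^2 := pow_le_pow_left₀ h2 h1 2
      rw [div_le_iff₀ h4t]
      have hce : -c * ((n:ℝ)-(M:ℝ))^2 * (4*t) = -((((n:ℝ)-(M:ℝ))*d)^2) := by
        rw [hcdef]; field_simp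
      rw [hce]
      linarith
    · have hn' : n ≤ M - 1 := by omega
      have hK : (((M - 1 - n).toNat : ℕ) : ℝ) = (M:ℝ) - 1 - (n:ℝ) := by
        rw [show (((M - 1 - n).toNat : ℕ):ℝ) = ((((M - 1 - n).toNat : ℕ):ℤ):ℝ) by push_cast; ring,
          Int.toNat_of_nonneg (show (0:ℤ) ≤ M - 1 - n by omega)]
        push_cast; ring
      rw [hK]
      have hnM : (n:ℝ) ≤ (M:ℝ) - 1 := by
        have : ((n:ℝ)) ≤ ((M - 1 : ℤ) : ℝ) := by exact_mod_cast hn'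
        push_cast at this; linarith
      have h2 : 0 ≤ ((M:ℝ)-1-(n:ℝ))*d := mul_nonneg (by linarith) hd.le
      have h1 : ((M:ℝ)-1-(n:ℝ))*d ≤ -(a + (n:ℝ)*d) := by nlinarith
      have h3 : (((M:ℝ)-1-(n:ℝ))*d)^2 ≤ (-(a + (n:ℝ)*d))^2 := pow_le_pow_left₀ h2 h1 2
      rw [neg_sq] at h3
      rw [div_le_iff₀ h4t]
      have hce : -c * ((M:ℝ)-1-(n:ℝ))^2 * (4*t) = -((((M:ℝ)-1-(n:ℝ))*d)^2) := by
        rw [hcdef]; field_simp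
      rw [hce]
      linarith
  rw [← Finset.sum_filter_add_sum_filter_not s (fun n => M ≤ n)]
  have A : ∑ n ∈ s.filter (fun n => M ≤ n), Real.exp (-(a + (n:ℝ)*d)^2/(4*t))
      ≤ 1 + Real.sqrt (π/c)/2 := by
    calc ∑ n ∈ s.filter (fun n => M ≤ n), Real.exp (-(a + (n:ℝ)*d)^2/(4*t))
        ≤ ∑ n ∈ s.filter (fun n => M ≤ n),
            Real.exp (-c * ((((n - M).toNat : ℕ)):ℝ)^2) := by
          apply Finset.sum_le_sum; intro n hn
          have h := key n
          rw [if_pos (Finset.mem_filter.mp hn).2] at h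
          exact h
      _ = ∑ j ∈ (s.filter (fun n => M ≤ n)).image (fun n => (n - M).toNat),
            Real.exp (-c*(j:ℝ)^2) := by
          rw [Finset.sum_image]
          intro x hx y hy hxy
          have hx' := (Finset.mem_filter.mp hx).2
          have hy' := (Finset.mem_filter.mp hy).2
          simp only at hxy
          omega
      _ ≤ 1 + Real.sqrt (π/c)/2 := sum_exp_sq_le c hc _
  have B : ∑ n ∈ s.filter (fun n => ¬ M ≤ n), Real.exp (-(a + (n:ℝ)*d)^2/(4*t))
      ≤ 1 + Real.sqrt (π/c)/2 := by
    calc ∑ n ∈ s.filter (fun n => ¬ M ≤ n), Real.exp (-(a + (n:ℝ)*d)^2/(4*t))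
        ≤ ∑ n ∈ s.filter (fun n => ¬ M ≤ n),
            Real.exp (-c * ((((M - 1 - n).toNat : ℕ)):ℝ)^2) := by
          apply Finset.sum_le_sum; intro n hn
          have h := key n
          rw [if_neg (Finset.mem_filter.mp hn).2] at h
          exact h
      _ = ∑ j ∈ (s.filter (fun n => ¬ M ≤ n)).image (fun n => (M - 1 - n).toNat),
            Real.exp (-c*(j:ℝ)^2) := by
          rw [Finset.sum_image]
          intro x hx y hy hxy
          have hx' := (Finset.mem_filter.mp hx).2
          have hy' := (Finset.mem_filter.mp hy).2
          simp only at hxy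
          omega
      _ ≤ 1 + Real.sqrt (π/c)/2 := sum_exp_sq_le c hc _
  linarith

open Real in
/-- **Gaussian sum estimate.** For every `ρ > 0` there is `c > 0`, depending only on
`ρ`, such that for every `h ∈ (0,1]`, every `L ≥ 0` and all `y b : ℝ`,
`Σ_{n∈ℤ} exp(−((−1)ⁿ y + 2nρ − b)²/(4h(L²+1))) ≤ 4 + c √(h(L²+1))`. -/
theorem gaussian_reflection_sum_bound (ρ : ℝ) (hρ : 0 < ρ) :
    ∃ c > (0:ℝ), ∀ h ∈ Ioc (0:ℝ) 1, ∀ L : ℝ, 0 ≤ L → ∀ y b : ℝ,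
      (∑' n : ℤ, Real.exp (-((-1:ℝ)^n * y + 2*(n:ℝ)*ρ - b)^2 / (4*h*(L^2+1)))) ≤
        4 + c * Real.sqrt (h*(L^2+1)) := by
  classical
  have hπ : (0:ℝ) < Real.sqrt π := Real.sqrt_pos.2 Real.pi_pos
  refine ⟨2 * Real.sqrt π / ρ, by positivity, ?_⟩
  intro h hh L hL y b
  set t : ℝ := h * (L^2+1) with htdef
  have ht : 0 < t := by have := hh.1; positivity
  have hsq : Real.sqrt (π / ((2*ρ)^2/(4*t))) = Real.sqrt π * Real.sqrt t / ρ := by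
    have h1 : π / ((2*ρ)^2/(4*t)) = (π * t) / ρ^2 := by field_simp; ring
    rw [h1, Real.sqrt_div (by positivity : (0:ℝ) ≤ π * t),
      Real.sqrt_mul Real.pi_pos.le, Real.sqrt_sq hρ.le]
  apply tsum_le_of_sum_le' (by positivity)
  intro s
  rw [← Finset.sum_filter_add_sum_filter_not s (fun n => Even n)]
  have hE : ∑ n ∈ s.filter (fun n => Even n),
      Real.exp (-((-1:ℝ)^n * y + 2*(n:ℝ)*ρ - b)^2 / (4*h*(L^2+1)))
      ≤ 2 + Real.sqrt π * Real.sqrt t / ρ := by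
    have hk := key_sum (2*ρ) t (y - b) (by linarith) ht (s.filter (fun n => Even n))
    rw [hsq] at hk
    refine le_trans (le_of_eq (Finset.sum_congr rfl ?_)) hk
    intro n hn
    have hev : Even n := (Finset.mem_filter.mp hn).2
    rw [Even.neg_one_zpow hev]
    congr 1
    rw [htdef]
    ring
  have hO : ∑ n ∈ s.filter (fun n => ¬ Even n),
      Real.exp (-((-1:ℝ)^n * y + 2*(n:ℝ)*ρ - b)^2 / (4*h*(L^2+1)))
      ≤ 2 + Real.sqrt π * Real.sqrt t / ρ := by
    have hk := key_sum (2*ρ) t (-y - b) (by linarith) ht (s.filter (fun n => ¬ Even n))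
    rw [hsq] at hk
    refine le_trans (le_of_eq (Finset.sum_congr rfl ?_)) hk
    intro n hn
    have hod : Odd n := Int.not_even_iff_odd.mp (Finset.mem_filter.mp hn).2
    rw [Odd.neg_one_zpow hod]
    congr 1
    rw [htdef]
    ring
  have : 2 * Real.sqrt π / ρ * Real.sqrt t = 2 * (Real.sqrt π * Real.sqrt t / ρ) := by ring
  rw [this]
  linarith
end

section
/- Let 𝓕 be a continuous positive decreasing real-valued function on [0,+∞) bounded by one. Suppose there are constants c₁ > 1 and c₂, β, γ > 0 such that 𝓕(s) ≤ c₁ (1/𝓕(s))^β ( 𝓕(s) − 𝓕( (c₂/𝓕(s))^γ + s ) ) for all s > 0. Then there exist C > 0 and δ > 0 such that 𝓕(t) ≤ C/t^δ for every t > 0. -/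
open Set

private noncomputable def decaySeq (F : ℝ → ℝ) (c₂ γ s₀ : ℝ) : ℕ → ℝ
  | 0 => s₀
  | n+1 => (c₂ / F (decaySeq F c₂ γ s₀ n)) ^ γ + decaySeq F c₂ γ s₀ n

set_option maxHeartbeats 800000 in
private lemma decay_key (F : ℝ → ℝ)
    (hpos : ∀ s ∈ Ici (0:ℝ), 0 < F s)
    (hdec : AntitoneOn F (Ici 0))
    (hbdd : ∀ s ∈ Ici (0:ℝ), F s ≤ 1)
    (c₁ c₂ β γ : ℝ) (hc₁ : 1 < c₁) (hc₂ : 0 < c₂) (hβ : 0 < β) (hγ : 0 < γ)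
    (hineq : ∀ s : ℝ, 0 < s →
      F s ≤ c₁ * (1 / F s) ^ β * (F s - F ((c₂ / F s) ^ γ + s)))
    (ε : ℝ) (hε : 0 < ε) (hε1 : ε ≤ 1) (s₀ : ℝ) (hs₀ : 0 < s₀) (hF0 : F s₀ ≤ ε) :
    ∀ t : ℝ, s₀ + (⌈c₁ * 2 ^ β * ε ^ (-β)⌉₊ : ℝ) * (2 * c₂ / ε) ^ γ ≤ t → F t ≤ ε / 2 := by
  have hc₁0 : (0:ℝ) < c₁ := lt_trans one_pos hc₁
  set L : ℝ := (2 * c₂ / ε) ^ γ with hLdef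
  have hL : 0 < L := Real.rpow_pos_of_pos (by positivity) γ
  set d : ℝ := (ε / 2) ^ (1 + β) / c₁ with hddef
  have hd : 0 < d := div_pos (Real.rpow_pos_of_pos (by positivity) _) hc₁0
  set N : ℕ := ⌈c₁ * 2 ^ β * ε ^ (-β)⌉₊ with hNdef
  set g : ℕ → ℝ := decaySeq F c₂ γ s₀ with hgdef
  have hg0 : g 0 = s₀ := rfl
  have hgs : ∀ n, g (n+1) = (c₂ / F (g n)) ^ γ + g n := fun n => rfl
  have claim : ∀ n : ℕ, (∃ x, 0 < x ∧ x ≤ s₀ + n * L ∧ F x ≤ ε/2) ∨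
      (0 < g n ∧ g n ≤ s₀ + n * L ∧ F (g n) ≤ ε - n * d) := by
    intro n
    induction n with
    | zero => right; exact ⟨hs₀, by simp [hg0], by simpa [hg0] using hF0⟩
    | succ n ih =>
      have hcast : ((n+1 : ℕ) : ℝ) = (n:ℝ) + 1 := by push_cast; ring
      rcases ih with ⟨x, hx, hxle, hxF⟩ | ⟨hgp, hgle, hgF⟩
      · left; exact ⟨x, hx, by rw [hcast]; nlinarith, hxF⟩
      · by_cases hcase : F (g n) ≤ ε / 2
        · left; exact ⟨g n, hgp, by rw [hcast]; nlinarith, hcase⟩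
        · push_neg at hcase
          have hu0 : 0 < F (g n) := hpos _ (le_of_lt hgp)
          have hu1 : F (g n) ≤ 1 := hbdd _ (le_of_lt hgp)
          have hstep : (c₂ / F (g n)) ^ γ ≤ L := by
            rw [hLdef]
            apply Real.rpow_le_rpow (by positivity) _ hγ.le
            rw [div_le_div_iff₀ hu0 hε]
            nlinarith
          have hstep0 : 0 < (c₂ / F (g n)) ^ γ :=
            Real.rpow_pos_of_pos (div_pos hc₂ hu0) γ
          have hub : 0 < F (g n) ^ β := Real.rpow_pos_of_pos hu0 β
          have hineq' := hineq (g n) hgp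
          rw [show (1 / F (g n)) ^ β = (F (g n) ^ β)⁻¹ by
            rw [one_div, Real.inv_rpow hu0.le]] at hineq'
          rw [← hgs n] at hineq'
          -- hineq' : F (g n) ≤ c₁ * (F (g n) ^ β)⁻¹ * (F (g n) - F (g (n+1)))
          have h2 : F (g n) * F (g n) ^ β ≤ c₁ * (F (g n) - F (g (n+1))) := by
            have h3 := mul_le_mul_of_nonneg_right hineq' hub.le
            have h4 : c₁ * (F (g n) ^ β)⁻¹ * (F (g n) - F (g (n+1))) * F (g n) ^ β
                = c₁ * (F (g n) - F (g (n+1))) := by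
              field_simp
            rw [h4] at h3
            linarith
          have hlow : (ε/2) * (ε/2) ^ β ≤ F (g n) * F (g n) ^ β := by
            have hr : (ε/2) ^ β ≤ F (g n) ^ β :=
              Real.rpow_le_rpow (by positivity) hcase.le hβ.le
            have hrn : (0:ℝ) ≤ (ε/2) ^ β := le_of_lt (Real.rpow_pos_of_pos (by positivity) β)
            nlinarith
          have hcd : c₁ * d = (ε/2) * (ε/2) ^ β := by
            rw [hddef, Real.rpow_add (by positivity : (0:ℝ) < ε/2), Real.rpow_one]
            field_simp
          have hdecr : F (g (n+1)) ≤ F (g n) - d := by nlinarith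
          right
          refine ⟨?_, ?_, ?_⟩
          · rw [hgs n]; linarith
          · rw [hgs n, hcast]; linarith
          · rw [hcast]; linarith
  have hNd : ε - (N:ℝ) * d ≤ ε / 2 := by
    have hceil : c₁ * 2 ^ β * ε ^ (-β) ≤ (N:ℝ) := Nat.le_ceil _
    have hiden : (c₁ * 2 ^ β * ε ^ (-β)) * d = ε / 2 := by
      have e1 : (ε/2) ^ ((1:ℝ)+β) = (ε/2) * (ε/2) ^ β := by
        rw [Real.rpow_add (by positivity : (0:ℝ) < ε/2), Real.rpow_one]
      have e2 : (ε/2) ^ β = ε ^ β / 2 ^ β := Real.div_rpow hε.le (by norm_num) β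
      have e3 : ε ^ (-β) * ε ^ β = 1 := by
        rw [← Real.rpow_add hε]; simp
      have h2b : (0:ℝ) < (2:ℝ) ^ β := Real.rpow_pos_of_pos two_pos β
      rw [hddef, e1, e2]
      calc c₁ * 2 ^ β * ε ^ (-β) * ((ε/2) * (ε ^ β / 2 ^ β) / c₁)
          = (ε/2) * (ε ^ (-β) * ε ^ β) * (c₁ / c₁) * ((2:ℝ) ^ β / 2 ^ β) := by ring
        _ = ε/2 := by rw [e3, div_self hc₁0.ne', div_self h2b.ne']; ring
    linarith [mul_le_mul_of_nonneg_right hceil hd.le, hiden]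
  intro t ht
  rcases claim N with ⟨x, hx, hxle, hxF⟩ | ⟨hgp, hgle, hgF⟩
  · exact le_trans (hdec (mem_Ici.mpr hx.le) (mem_Ici.mpr (by linarith)) (by linarith)) hxF
  · exact le_trans (hdec (mem_Ici.mpr hgp.le) (mem_Ici.mpr (by linarith)) (by linarith))
      (le_trans hgF hNd)

set_option maxHeartbeats 800000 in
/-- **Lemma (Appendix B).** Let `𝓕` be a continuous positive decreasing real function
on `[0,∞)`, bounded by one, satisfying
`𝓕(s) ≤ c₁ (1/𝓕(s))^β (𝓕(s) − 𝓕((c₂/𝓕(s))^γ + s))` for all `s > 0`, where `c₁ > 1`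
and `c₂, β, γ > 0`. Then there exist `C > 0` and `δ > 0` such that
`𝓕(t) ≤ C/t^δ` for all `t > 0`. -/
theorem polynomial_decay_lemma (F : ℝ → ℝ)
    (hcont : ContinuousOn F (Ici 0))
    (hpos : ∀ s ∈ Ici (0:ℝ), 0 < F s)
    (hdec : AntitoneOn F (Ici 0))
    (hbdd : ∀ s ∈ Ici (0:ℝ), F s ≤ 1)
    (c₁ c₂ β γ : ℝ) (hc₁ : 1 < c₁) (hc₂ : 0 < c₂) (hβ : 0 < β) (hγ : 0 < γ)
    (hineq : ∀ s : ℝ, 0 < s →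
      F s ≤ c₁ * (1 / F s) ^ β * (F s - F ((c₂ / F s) ^ γ + s))) :
    ∃ C > (0:ℝ), ∃ δ > (0:ℝ), ∀ t : ℝ, 0 < t → F t ≤ C / t ^ δ := by
  have hβγ : 0 < β + γ := by positivity
  have hc₁0 : (0:ℝ) < c₁ := lt_trans one_pos hc₁
  set A : ℝ := (c₁ * 2 ^ β + 1) * (2 * c₂) ^ γ with hAdef
  have hA : 0 < A := by
    apply mul_pos
    · have := mul_pos hc₁0 (Real.rpow_pos_of_pos two_pos β); linarith
    · exact Real.rpow_pos_of_pos (by positivity) γ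
  have h2bg1 : (1:ℝ) < 2 ^ (β + γ) := by
    calc (1:ℝ) = 2 ^ (0:ℝ) := (Real.rpow_zero 2).symm
    _ < 2 ^ (β + γ) := Real.rpow_lt_rpow_of_exponent_lt one_lt_two hβγ
  set B : ℝ := 1 + A / (2 ^ (β+γ) - 1) with hBdef
  have hB1 : 1 ≤ B := by
    rw [hBdef]
    have : 0 < A / (2 ^ (β+γ) - 1) := div_pos hA (by linarith)
    linarith
  have hB : 0 < B := lt_of_lt_of_le one_pos hB1
  set T : ℕ → ℝ := fun k => B * 2 ^ ((k:ℝ) * (β + γ)) with hTdef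
  have hTk_eq : ∀ m : ℕ, T m = B * 2 ^ ((m:ℝ) * (β + γ)) := fun m => rfl
  have hTpos : ∀ k, 0 < T k := fun k => mul_pos hB (Real.rpow_pos_of_pos two_pos _)
  have main : ∀ k : ℕ, ∀ t : ℝ, T k ≤ t → F t ≤ 2 ^ (-(k:ℝ)) := by
    intro k
    induction k with
    | zero =>
      intro t ht
      have hT0 : T 0 = B := by rw [hTk_eq]; simp
      rw [hT0] at ht
      have := hbdd t (mem_Ici.mpr (by linarith))
      simpa using this
    | succ k ih =>
      intro t ht
      have he : (0:ℝ) < 2 ^ (-(k:ℝ)) := Real.rpow_pos_of_pos two_pos _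
      have he1 : (2:ℝ) ^ (-(k:ℝ)) ≤ 1 :=
        Real.rpow_le_one_of_one_le_of_nonpos one_le_two (by simp)
      have hFTk : F (T k) ≤ 2 ^ (-(k:ℝ)) := ih (T k) le_rfl
      have einv : ((2:ℝ) ^ (-(k:ℝ))) ^ (-β) = 2 ^ ((k:ℝ) * β) := by
        rw [← Real.rpow_mul (by norm_num : (0:ℝ) ≤ 2)]; ring_nf
      have hone : (1:ℝ) ≤ 2 ^ ((k:ℝ) * β) :=
        Real.one_le_rpow one_le_two (by positivity)
      have hNb : (⌈c₁ * 2 ^ β * ((2:ℝ) ^ (-(k:ℝ))) ^ (-β)⌉₊ : ℝ)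
          ≤ (c₁ * 2 ^ β + 1) * 2 ^ ((k:ℝ) * β) := by
        rw [einv]
        have hnn : (0:ℝ) ≤ c₁ * 2 ^ β * 2 ^ ((k:ℝ) * β) := by
          have := Real.rpow_pos_of_pos two_pos β
          have := Real.rpow_pos_of_pos two_pos ((k:ℝ) * β)
          positivity
        have h2 := Nat.ceil_lt_add_one hnn
        have h2b : (0:ℝ) < (2:ℝ) ^ β := Real.rpow_pos_of_pos two_pos β
        nlinarith
      have hLb : (2 * c₂ / 2 ^ (-(k:ℝ))) ^ γ = (2*c₂) ^ γ * 2 ^ ((k:ℝ)*γ) := by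
        rw [div_eq_mul_inv, Real.rpow_neg (by norm_num : (0:ℝ) ≤ 2), inv_inv,
          Real.mul_rpow (by positivity) (by positivity),
          ← Real.rpow_mul (by norm_num : (0:ℝ) ≤ 2)]
      have hsplit : (2:ℝ) ^ ((k:ℝ)*(β+γ)) = 2 ^ ((k:ℝ)*β) * 2 ^ ((k:ℝ)*γ) := by
        rw [← Real.rpow_add two_pos]; ring_nf
      have h2cγ : (0:ℝ) < (2*c₂) ^ γ := Real.rpow_pos_of_pos (by positivity) γ
      have h2kγ : (0:ℝ) < (2:ℝ) ^ ((k:ℝ)*γ) := Real.rpow_pos_of_pos two_pos _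
      have hGb : (⌈c₁ * 2 ^ β * ((2:ℝ) ^ (-(k:ℝ))) ^ (-β)⌉₊ : ℝ)
          * (2 * c₂ / 2 ^ (-(k:ℝ))) ^ γ ≤ A * 2 ^ ((k:ℝ)*(β+γ)) := by
        rw [hLb, hAdef, hsplit]
        calc (⌈c₁ * 2 ^ β * ((2:ℝ) ^ (-(k:ℝ))) ^ (-β)⌉₊ : ℝ) * ((2*c₂) ^ γ * 2 ^ ((k:ℝ)*γ))
            ≤ ((c₁ * 2 ^ β + 1) * 2 ^ ((k:ℝ) * β)) * ((2*c₂) ^ γ * 2 ^ ((k:ℝ)*γ)) :=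
              mul_le_mul_of_nonneg_right hNb (by positivity)
          _ = (c₁ * 2 ^ β + 1) * (2 * c₂) ^ γ * (2 ^ ((k:ℝ)*β) * 2 ^ ((k:ℝ)*γ)) := by ring
      have hTk1 : T k + A * 2 ^ ((k:ℝ)*(β+γ)) ≤ T (k+1) := by
        have hTk1' : T (k+1) = B * (2 ^ ((k:ℝ)*(β+γ)) * 2 ^ (β+γ)) := by
          rw [hTk_eq, ← Real.rpow_add two_pos]
          congr 1
          push_cast; ring
        have hBineq : A ≤ B * (2 ^ (β+γ) - 1) := by
          rw [hBdef, add_mul, one_mul, div_mul_cancel₀ _ (by linarith : (2:ℝ) ^ (β+γ) - 1 ≠ 0)]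
          linarith
        have hp : (0:ℝ) < (2:ℝ) ^ ((k:ℝ)*(β+γ)) := Real.rpow_pos_of_pos two_pos _
        rw [hTk1', hTk_eq]
        nlinarith
      have hGt : T k + (⌈c₁ * 2 ^ β * ((2:ℝ) ^ (-(k:ℝ))) ^ (-β)⌉₊ : ℝ)
          * (2 * c₂ / 2 ^ (-(k:ℝ))) ^ γ ≤ t := by linarith
      have happly := decay_key F hpos hdec hbdd c₁ c₂ β γ hc₁ hc₂ hβ hγ hineq
        (2 ^ (-(k:ℝ))) he he1 (T k) (hTpos k) hFTk t hGt
      calc F t ≤ 2 ^ (-(k:ℝ)) / 2 := happly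
        _ = 2 ^ (-((k+1:ℕ):ℝ)) := by
          rw [show -(((k+1:ℕ)):ℝ) = -(k:ℝ) + (-1) by push_cast; ring,
            Real.rpow_add two_pos, Real.rpow_neg_one]
          ring
  refine ⟨2 * B ^ (1/(β+γ)), by positivity, 1/(β+γ), by positivity, ?_⟩
  intro t ht
  set δ : ℝ := 1/(β+γ) with hδdef
  have hδ : 0 < δ := by rw [hδdef]; positivity
  have htδ : 0 < t ^ δ := Real.rpow_pos_of_pos ht δ
  have hBδ : 0 < B ^ δ := Real.rpow_pos_of_pos hB δ
  by_cases hcase : t ≤ B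
  · have h1 : t ^ δ ≤ B ^ δ := Real.rpow_le_rpow ht.le hcase hδ.le
    have h2 : F t ≤ 1 := hbdd t (mem_Ici.mpr ht.le)
    rw [le_div_iff₀ htδ]
    nlinarith
  · push_neg at hcase
    set x : ℝ := (t/B) ^ δ with hxdef
    have hx1 : (1:ℝ) ≤ x :=
      Real.one_le_rpow ((one_le_div hB).mpr hcase.le) hδ.le
    have hx0 : 0 < x := lt_of_lt_of_le one_pos hx1
    set k : ℕ := Nat.log 2 ⌊x⌋₊ with hkdef
    have hfl1 : 1 ≤ ⌊x⌋₊ := Nat.le_floor (by exact_mod_cast hx1)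
    have h2k : ((2:ℝ)) ^ (k:ℕ) ≤ x := by
      have h := Nat.pow_log_le_self 2 (by omega : ⌊x⌋₊ ≠ 0)
      calc ((2:ℝ))^(k:ℕ) = ((2^(k:ℕ) : ℕ) : ℝ) := by push_cast; ring
        _ ≤ (⌊x⌋₊ : ℝ) := by exact_mod_cast h
        _ ≤ x := Nat.floor_le hx0.le
    have hxlt : x < (2:ℝ) ^ (k+1) := by
      have h := Nat.lt_pow_succ_log_self (by norm_num : 1 < 2) ⌊x⌋₊
      have h2 : (⌊x⌋₊ : ℝ) + 1 ≤ ((2^(k+1) : ℕ) : ℝ) := by exact_mod_cast Nat.succ_le_of_lt h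
      have h3 := Nat.lt_floor_add_one x
      push_cast at h2
      linarith
    have hxp : x ^ (β+γ) = t / B := by
      rw [hxdef, ← Real.rpow_mul (by positivity : (0:ℝ) ≤ t/B),
        show δ * (β+γ) = 1 by rw [hδdef]; field_simp, Real.rpow_one]
    have happ : T k ≤ t := by
      have h1 : (2:ℝ) ^ ((k:ℝ)*(β+γ)) ≤ t / B := by
        calc (2:ℝ) ^ ((k:ℝ)*(β+γ)) = ((2:ℝ)^(k:ℕ)) ^ (β+γ) := by
              rw [← Real.rpow_natCast 2 k, ← Real.rpow_mul (by norm_num : (0:ℝ) ≤ 2)]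
          _ ≤ x ^ (β+γ) := Real.rpow_le_rpow (by positivity) h2k hβγ.le
          _ = t / B := hxp
      rw [hTk_eq]
      calc B * 2 ^ ((k:ℝ)*(β+γ)) ≤ B * (t/B) := mul_le_mul_of_nonneg_left h1 hB.le
        _ = t := by field_simp
    have hFt := main k t happ
    have h2kpos : (0:ℝ) < (2:ℝ)^(k:ℕ) := by positivity
    have hfin : (2:ℝ) ^ (-(k:ℝ)) ≤ 2 / x := by
      rw [Real.rpow_neg (by norm_num : (0:ℝ) ≤ 2), Real.rpow_natCast,
        le_div_iff₀ hx0, inv_mul_le_iff₀ h2kpos]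
      have : (2:ℝ)^(k+1) = (2:ℝ)^(k:ℕ) * 2 := by rw [pow_succ]
      linarith
    have h2x : 2 / x = 2 * B ^ δ / t ^ δ := by
      rw [hxdef, Real.div_rpow ht.le hB.le, div_div_eq_mul_div]
    linarith
end

section
/- Let 𝓕 be a continuous positive decreasing real-valued function on [0,+∞) bounded by one, and suppose there are constants c₁ > 1 and c₂, β, γ > 0 such that 𝓕(s) ≤ c₁ (1/𝓕(s))^β ( 𝓕(s) − 𝓕( (c₂/𝓕(s))^γ + s ) ) for all s > 0. Then for every t > 0 and every integer n ≥ 1, 𝓕((n+1)t) ≤ (c₁/(n+1))^{1/(β+1)} + c₂/t^{1/γ}; in particular, for every t ≥ 2, 𝓕(t²) ≤ (2c₁/t)^{1/(β+1)} + c₂/t^{1/γ}. -/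
open Set

lemma pd_part1 (F : ℝ → ℝ)
    (hpos : ∀ s ∈ Ici (0:ℝ), 0 < F s)
    (hdec : AntitoneOn F (Ici 0))
    (hbdd : ∀ s ∈ Ici (0:ℝ), F s ≤ 1)
    (c₁ c₂ β γ : ℝ) (hc₁ : 1 < c₁) (hc₂ : 0 < c₂) (hβ : 0 < β) (hγ : 0 < γ)
    (hineq : ∀ s : ℝ, 0 < s →
      F s ≤ c₁ * (1 / F s) ^ β * (F s - F ((c₂ / F s) ^ γ + s)))
    (t : ℝ) (ht : 0 < t) (n : ℕ) (hn : 1 ≤ n) :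
    F (((n:ℝ)+1) * t) ≤ (c₁ / ((n:ℝ)+1)) ^ (1/(β+1)) + c₂ / t ^ (1/γ) := by
  set A : ℝ := (c₁ / ((n:ℝ)+1)) ^ (1/(β+1)) + c₂ / t ^ (1/γ) with hAdef
  by_contra hcon
  push_neg at hcon
  have hN1 : (0:ℝ) < (n:ℝ)+1 := by positivity
  have hc₁0 : (0:ℝ) < c₁ := by linarith
  have htγ : (0:ℝ) < t ^ (1/γ) := Real.rpow_pos_of_pos ht _
  have hx0 : (0:ℝ) < c₁ / ((n:ℝ)+1) := by positivity
  have hpos2 : (0:ℝ) < c₂ / t ^ (1/γ) := div_pos hc₂ htγ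
  have hA0 : 0 < A := by
    rw [hAdef]
    exact add_pos (Real.rpow_pos_of_pos hx0 _) hpos2
  have hβ1 : (0:ℝ) < β + 1 := by linarith
  -- key step
  have key : ∀ s : ℝ, 0 < s → s ≤ ((n:ℝ)+1)*t →
      F (s + t) ≤ F s - 1/((n:ℝ)+1) := by
    intro s hs hsle
    have hs0 : s ∈ Ici (0:ℝ) := le_of_lt hs
    have hFs : A < F s := by
      have h1 : F (((n:ℝ)+1)*t) ≤ F s :=
        hdec hs0 (mem_Ici.mpr (by positivity)) hsle
      linarith
    have hFspos : 0 < F s := hpos s hs0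
    have hFst : c₂ / t ^ (1/γ) ≤ F s := by
      have h2 : 0 < (c₁ / ((n:ℝ)+1)) ^ (1/(β+1)) := Real.rpow_pos_of_pos hx0 _
      rw [hAdef] at hFs; linarith
    set d : ℝ := (c₂ / F s) ^ γ with hddef
    have hd0 : 0 ≤ d := Real.rpow_nonneg (by positivity) _
    have hdt : d ≤ t := by
      have h1 : c₂ / F s ≤ t ^ (1/γ) := by
        rw [div_le_iff₀ hFspos]
        have := (div_le_iff₀ htγ).mp hFst
        linarith
      have h2 : d ≤ (t ^ (1/γ)) ^ γ :=
        Real.rpow_le_rpow (by positivity) h1 hγ.le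
      rwa [← Real.rpow_mul ht.le, one_div_mul_cancel hγ.ne', Real.rpow_one] at h2
    -- from hineq, get the decrement
    have h1 := hineq s hs
    have e1 : (1 / F s) ^ β = (F s ^ β)⁻¹ := by
      rw [one_div, Real.inv_rpow hFspos.le]
    have hFβ : 0 < F s ^ β := Real.rpow_pos_of_pos hFspos β
    rw [e1] at h1
    have h2 : F s * F s ^ β ≤ c₁ * (F s - F (d + s)) := by
      have h2' := mul_le_mul_of_nonneg_right h1 hFβ.le
      calc F s * F s ^ β ≤ c₁ * (F s ^ β)⁻¹ * (F s - F (d + s)) * F s ^ β := h2'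
        _ = c₁ * (F s - F (d + s)) := by field_simp
    have h3 : F s ^ (β+1) = F s * F s ^ β := by
      rw [Real.rpow_add hFspos, Real.rpow_one]; ring
    have h4 : c₁/((n:ℝ)+1) ≤ F s ^ (β+1) := by
      have hAle : (c₁ / ((n:ℝ)+1)) ^ (1/(β+1)) ≤ A := by
        rw [hAdef]; linarith
      have hrr : ((c₁ / ((n:ℝ)+1)) ^ (1/(β+1))) ^ (β+1) ≤ F s ^ (β+1) :=
        Real.rpow_le_rpow (Real.rpow_nonneg hx0.le _)
          (le_of_lt (lt_of_le_of_lt hAle hFs)) hβ1.le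
      rwa [← Real.rpow_mul hx0.le, one_div_mul_cancel hβ1.ne', Real.rpow_one] at hrr
    have h5 : 1/((n:ℝ)+1) ≤ F s - F (d + s) := by
      have h6 : c₁ * (1/((n:ℝ)+1)) ≤ c₁ * (F s - F (d + s)) := by
        calc c₁ * (1/((n:ℝ)+1)) = c₁/((n:ℝ)+1) := by ring
          _ ≤ F s ^ (β+1) := h4
          _ = F s * F s ^ β := h3
          _ ≤ _ := h2
      exact le_of_mul_le_mul_left h6 hc₁0
    have h7 : F (s + t) ≤ F (d + s) := by
      apply hdec (mem_Ici.mpr (by linarith)) (mem_Ici.mpr (by linarith))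
      linarith
    linarith
  -- telescoping
  have claim : ∀ k : ℕ, k ≤ n → F (((k:ℝ)+1) * t) ≤ F t - (k:ℝ)/((n:ℝ)+1) := by
    intro k
    induction k with
    | zero => intro _; simp
    | succ k ih =>
      intro hk
      have ihk := ih (by omega)
      have hkle : ((k:ℝ)+1) * t ≤ ((n:ℝ)+1)*t := by
        have h1 : (k:ℝ) + 1 ≤ (n:ℝ) := by exact_mod_cast hk
        nlinarith
      have step := key (((k:ℝ)+1) * t) (by positivity) hkle
      have heq : ((k:ℝ)+1) * t + t = (((k:ℝ)+1) + 1) * t := by ring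
      rw [heq] at step
      have hsplit : ((k:ℝ)+1)/((n:ℝ)+1) = (k:ℝ)/((n:ℝ)+1) + 1/((n:ℝ)+1) := by ring
      push_cast
      linarith
  have hfin := claim n le_rfl
  have hFt1 : F t ≤ 1 := hbdd t (le_of_lt ht)
  have hsmall : F (((n:ℝ)+1) * t) ≤ 1/((n:ℝ)+1) := by
    have h9 : 1 - (n:ℝ)/((n:ℝ)+1) = 1/((n:ℝ)+1) := by field_simp; ring
    linarith
  -- contradiction
  by_cases hcase : c₁ ≤ (n:ℝ)+1
  · have hx1 : c₁ / ((n:ℝ)+1) ≤ 1 := by rw [div_le_one hN1]; exact hcase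
    have hge : c₁/((n:ℝ)+1) ≤ (c₁ / ((n:ℝ)+1)) ^ (1/(β+1)) := by
      have h10 := Real.rpow_le_rpow_of_exponent_ge hx0 hx1
        (by rw [div_le_one hβ1]; linarith : 1/(β+1) ≤ 1)
      rwa [Real.rpow_one] at h10
    have h8 : 1/((n:ℝ)+1) < c₁/((n:ℝ)+1) := by
      rw [div_lt_div_iff₀ hN1 hN1]; nlinarith
    rw [hAdef] at hcon
    linarith
  · push_neg at hcase
    have hx1 : (1:ℝ) ≤ c₁ / ((n:ℝ)+1) := by rw [le_div_iff₀ hN1]; linarith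
    have hge : (1:ℝ) ≤ (c₁ / ((n:ℝ)+1)) ^ (1/(β+1)) :=
      Real.one_le_rpow hx1 (div_pos one_pos hβ1).le
    have hb : F (((n:ℝ)+1) * t) ≤ 1 := hbdd _ (mem_Ici.mpr (by positivity))
    rw [hAdef] at hcon
    linarith

/-- **Quantitative step of the Lemma in Appendix B.** Under the hypotheses of the
lemma, for every `t > 0` and every integer `n ≥ 1`,
`𝓕((n+1)t) ≤ (c₁/(n+1))^{1/(β+1)} + c₂/t^{1/γ}`, and in particular for every `t ≥ 2`,
`𝓕(t²) ≤ (2c₁/t)^{1/(β+1)} + c₂/t^{1/γ}`. -/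
theorem polynomial_decay_lemma_quantitative (F : ℝ → ℝ)
    (hcont : ContinuousOn F (Ici 0))
    (hpos : ∀ s ∈ Ici (0:ℝ), 0 < F s)
    (hdec : AntitoneOn F (Ici 0))
    (hbdd : ∀ s ∈ Ici (0:ℝ), F s ≤ 1)
    (c₁ c₂ β γ : ℝ) (hc₁ : 1 < c₁) (hc₂ : 0 < c₂) (hβ : 0 < β) (hγ : 0 < γ)
    (hineq : ∀ s : ℝ, 0 < s →
      F s ≤ c₁ * (1 / F s) ^ β * (F s - F ((c₂ / F s) ^ γ + s))) :
    (∀ t : ℝ, 0 < t → ∀ n : ℕ, 1 ≤ n →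
      F (((n:ℝ)+1) * t) ≤ (c₁ / ((n:ℝ)+1)) ^ (1/(β+1)) + c₂ / t ^ (1/γ)) ∧
    (∀ t : ℝ, 2 ≤ t →
      F (t^2) ≤ (2*c₁ / t) ^ (1/(β+1)) + c₂ / t ^ (1/γ)) := by
  have part1 := pd_part1 F hpos hdec hbdd c₁ c₂ β γ hc₁ hc₂ hβ hγ hineq
  refine ⟨part1, ?_⟩
  intro t ht2
  have ht : (0:ℝ) < t := by linarith
  have hc₁0 : (0:ℝ) < c₁ := by linarith
  have hβ1 : (0:ℝ) < β + 1 := by linarith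
  set m : ℕ := ⌊t⌋₊ with hm
  have hm2 : 2 ≤ m := Nat.le_floor (by exact_mod_cast ht2)
  have hmle : (m:ℝ) ≤ t := Nat.floor_le ht.le
  have hmgt : t < (m:ℝ) + 1 := Nat.lt_floor_add_one t
  have hm0 : (0:ℝ) < (m:ℝ) := by
    have : (2:ℝ) ≤ (m:ℝ) := by exact_mod_cast hm2
    linarith
  set n : ℕ := m - 1 with hn
  have hn1 : 1 ≤ n := by omega
  have hcast : ((n:ℝ)+1) = (m:ℝ) := by
    have : ((n:ℕ):ℝ) = ((m:ℕ):ℝ) - 1 := by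
      rw [hn]; push_cast [Nat.cast_sub (by omega : 1 ≤ m)]; ring
    rw [this]; ring
  have h1 := part1 t ht n hn1
  rw [hcast] at h1
  have h2 : F (t^2) ≤ F ((m:ℝ) * t) := by
    apply hdec (mem_Ici.mpr (by positivity)) (mem_Ici.mpr (by positivity))
    nlinarith
  have h3 : (c₁ / (m:ℝ)) ^ (1/(β+1)) ≤ (2*c₁ / t) ^ (1/(β+1)) := by
    apply Real.rpow_le_rpow (by positivity)
    · rw [div_le_div_iff₀ hm0 ht]
      nlinarith
    · exact (div_pos one_pos hβ1).le
  linarith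
end
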